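/- The cyclic code C = ⟨v(z+1) + v²⟩ of length 4 over R = Z₂[v]/(v³) is not a (1,1)-reversible complement code. -/

import Mathlib

open Polynomial

noncomputable section

/-- The finite chain ring `R = Z₂[v]/(v³) = Z₂ + vZ₂ + v²Z₂`, `v³ = 0`. -/
abbrev Rv : Type := Polynomial (ZMod 2) ⧸ Ideal.span {(X : Polynomial (ZMod 2)) ^ 3}

instance instCommSemiringRv : CommSemiring Rv := Ideal.Quotient.commSemiring _

/-- The element `v` of `Rv`. -/
def vv : Rv := Ideal.Quotient.mk _ X

/-- The ambient ring `R[z]/(z⁴ − 1)` of cyclic codes of length 4 over `Rv`. -/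
abbrev Q4 : Type := Polynomial Rv ⧸ Ideal.span {(X : Polynomial Rv) ^ 4 - 1}

/-- The element `z` of `Q4`. -/
def zz : Q4 := Ideal.Quotient.mk _ X

/-- The constant `r` viewed in `Q4`. -/
def cst (r : Rv) : Q4 := Ideal.Quotient.mk _ (C r)

/-- The element of `Q4` corresponding to the length-4 codeword `a`. -/
def word4 (a : Fin 4 → Rv) : Q4 := Ideal.Quotient.mk _ (∑ i : Fin 4, C (a i) * X ^ (i : ℕ))

/-- `I` is a `(1,1)`-reversible complement cyclic code: it contains the
`(1,1)`-reverse complement `∑ᵢ (1 + a_{3−i}) zⁱ` of each codeword `∑ᵢ aᵢ zⁱ`. -/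
def IsRC11 (I : Ideal Q4) : Prop :=
  ∀ a : Fin 4 → Rv, word4 a ∈ I → word4 (fun i => 1 + a (Fin.rev i)) ∈ I



/-!
The all-zero word lies in every code, so a `(1,1)`-reversible complement code must contain
its reverse complement, the all-one word `1 + z + z² + z³`. But the generator
`v(z + 1) + v²` is divisible by `v`, so the code dies under reduction modulo `v`, whereas the
all-one word survives as a nonzero element of `𝔽₂[z]/(z⁴ − 1)`.
-/

lemma IsRC11.word4_one_mem {I : Ideal Q4} (h : IsRC11 I) : word4 (fun _ => 1) ∈ I := by
  have hzero : word4 (fun _ => 0) ∈ I := by simp [word4]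
  simpa using h _ hzero

def reduceModV : Rv →+* ZMod 2 :=
  Ideal.Quotient.lift _ (evalRingHom 0) fun p hp => by
    obtain ⟨q, rfl⟩ := Ideal.mem_span_singleton.1 hp
    simp

lemma reduceModV_vv : reduceModV vv = 0 := by
  simp [reduceModV, vv]

def reduceModVQ4 : Q4 →+* Polynomial (ZMod 2) ⧸ Ideal.span {(X : Polynomial (ZMod 2)) ^ 4 - 1} :=
  Ideal.quotientMap _ (mapRingHom reduceModV) <| Ideal.span_le.2 <| by simp

lemma reduceModVQ4_generator : reduceModVQ4 (cst vv * (zz + 1) + cst (vv ^ 2)) = 0 := by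
  simp [reduceModVQ4, cst, zz, Ideal.quotientMap_mk, reduceModV_vv]

lemma reduceModVQ4_word4_one_ne_zero : reduceModVQ4 (word4 fun _ => 1) ≠ 0 := by
  have hmonic : ((X : Polynomial (ZMod 2)) ^ 4 - 1).Monic := by monicity!
  have hsum : (∑ i : Fin 4, (X : Polynomial (ZMod 2)) ^ (i : ℕ)) = 1 + X + X ^ 2 + X ^ 3 := by
    simp [Fin.sum_univ_four]
  rw [reduceModVQ4, word4, Ideal.quotientMap_mk, ne_eq, Ideal.Quotient.eq_zero_iff_dvd]
  simp only [map_one, coe_mapRingHom, Polynomial.map_sum, Polynomial.map_pow, map_X, one_mul, hsum]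
  refine hmonic.not_dvd_of_natDegree_lt (fun h => by simpa using congrArg (coeff · 0) h) ?_
  have hdeg3 : (1 + X + X ^ 2 + X ^ 3 : Polynomial (ZMod 2)).natDegree ≤ 3 := by compute_degree
  have hdeg4 : ((X : Polynomial (ZMod 2)) ^ 4 - 1).natDegree = 4 := by compute_degree!
  omega

/-- The cyclic code `C = ⟨v(z+1) + v²⟩` of length 4 over `Z₂[v]/(v³)` is
not a `(1,1)`-reversible complement code. -/
theorem stmt14 : ¬ IsRC11 (Ideal.span {cst vv * (zz + 1) + cst (vv ^ 2)}) := by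
  intro h
  have hker : Ideal.span {cst vv * (zz + 1) + cst (vv ^ 2)} ≤ RingHom.ker reduceModVQ4 :=
    (Ideal.span_singleton_le_iff_mem _).2 reduceModVQ4_generator
  exact reduceModVQ4_word4_one_ne_zero (hker h.word4_one_mem)
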